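/- arXiv:2103.14074 — 7 statements merged into one kernel-verified Lean document; each statement's English description precedes it below -/
import Mathlib

section
/- Let C = (o₁,o₂,x₁,…,x_n) ∈ F(ℝ^d, n+2) with c̄p(C) = n+2, i.e. all the n+2 projections p_C(o₁), p_C(o₂), p_C(x₁),…,p_C(x_n) are pairwise distinct. Then for every t ∈ [0,1], the tuple φ(C,t) = (o₁, o₂, x₁ + t(p_C(x₁)−x₁), …, x_n + t(p_C(x_n)−x_n)) lies in F(ℝ^d, n+2); i.e. the straight-line homotopy from each point to its projection preserves distinctness. -/
open scoped RealInnerProductSpace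

noncomputable section

variable {d n : ℕ}

/-- The unit vector `e_C = (o₂ − o₁)/‖o₂ − o₁‖` of a configuration with obstacles
`o₁ = C 0`, `o₂ = C 1`. -/
def eDir (C : Fin (n + 2) → EuclideanSpace ℝ (Fin d)) : EuclideanSpace ℝ (Fin d) :=
  ‖C 1 - C 0‖⁻¹ • (C 1 - C 0)

/-- The orthogonal projection `p_C` onto the line `L_C` through `o₁ = C 0` and
`o₂ = C 1`: `p_C(x) = o₁ + ⟨x − o₁, e_C⟩ e_C`. -/
def projL (C : Fin (n + 2) → EuclideanSpace ℝ (Fin d))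
    (x : EuclideanSpace ℝ (Fin d)) : EuclideanSpace ℝ (Fin d) :=
  C 0 + ⟪x - C 0, eDir C⟫ • eDir C

open Classical in
/-- `c̄p(C)`: the number of distinct projections of the `n+2` points of `C`
onto the line `L_C`. -/
def cp (C : Fin (n + 2) → EuclideanSpace ℝ (Fin d)) : ℕ :=
  (Finset.univ.image fun i : Fin (n + 2) => projL C (C i)).card

end

/-- If all `n+2` projections of the points of `C` onto `L_C` are pairwise
distinct, then the straight-line homotopy from each point to its projection
keeps the configuration in `F(ℝ^d, n+2)` for every `t ∈ [0,1]`. -/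
theorem straightLine_to_projection_injective (d n : ℕ)
    (C : Fin (n + 2) → EuclideanSpace ℝ (Fin d))
    (hC : Function.Injective C)
    (hproj : Function.Injective fun i => projL C (C i)) :
    ∀ t ∈ Set.Icc (0 : ℝ) 1,
      Function.Injective fun i => C i + t • (projL C (C i) - C i) := by
  intro t _ i j hij
  have h10 : C 1 - C 0 ≠ 0 := sub_ne_zero.mpr fun h =>
    absurd (hC h) (by simp [Fin.ext_iff])
  have hnorm : ‖C 1 - C 0‖ ≠ 0 := norm_ne_zero_iff.mpr h10
  have he : ⟪eDir C, eDir C⟫ = 1 := by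
    rw [real_inner_self_eq_norm_sq]
    simp [eDir, norm_smul, abs_of_nonneg (inv_nonneg.mpr (norm_nonneg _)),
      inv_mul_cancel₀ hnorm]
  have hlem : ∀ x w : EuclideanSpace ℝ (Fin d), ⟪w, eDir C⟫ = 0 →
      projL C (x + w) = projL C x := by
    intro x w hw
    simp only [projL]
    congr 2
    rw [add_sub_right_comm, inner_add_left, hw, add_zero]
  have key : ∀ x : EuclideanSpace ℝ (Fin d),
      projL C (x + t • (projL C x - x)) = projL C x := by
    intro x
    have hper : ⟪projL C x - x, eDir C⟫ = 0 := by
      have h1 : projL C x - x = -(x - C 0) + ⟪x - C 0, eDir C⟫ • eDir C := by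
        simp only [projL]; abel
      rw [h1, inner_add_left, inner_neg_left, inner_smul_left, he]
      simp
    exact hlem x _ (by rw [inner_smul_left, hper]; ring)
  refine hproj ?_
  show projL C (C i) = projL C (C j)
  rw [← key (C i), ← key (C j)]
  exact congrArg (projL C) hij
end

section
/- Let C = (o₁,o₂,x₁,…,x_n) ∈ F(ℝ^d, n+2) and set ε̄(C) = (1/(n+2)) · min{ |p_C(y) − p_C(y')| : y, y' ∈ {o₁,o₂,x₁,…,x_n}, p_C(y) ≠ p_C(y') }, where the minimum ranges over all pairs among the n+2 points (this set is nonempty since p_C(o₁) ≠ p_C(o₂)). Define z̄_j(C,t) = x_j + t·j·ε̄(C)·e_C for j = 1,…,n. Then the projections p_C(o₁), p_C(o₂), p_C(z̄₁(C,1)),…,p_C(z̄_n(C,1)) are pairwise distinct; i.e. the desingularized configuration F(C,1) = (o₁,o₂,z̄₁(C,1),…,z̄_n(C,1)) satisfies c̄p(F(C,1)) = n+2. -/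
open scoped RealInnerProductSpace

noncomputable section

variable {d n : ℕ}

/-- `ε̄(C) = (1/(n+2)) · min{ ‖p_C(y_r) − p_C(y_s)‖ : p_C(y_r) ≠ p_C(y_s) }`,
the minimum running over all pairs of entries of `C` (obstacles included). -/
def epsBar (C : Fin (n + 2) → EuclideanSpace ℝ (Fin d)) : ℝ :=
  (1 / (n + 2 : ℝ)) *
    sInf {r : ℝ | ∃ i j : Fin (n + 2),
      projL C (C i) ≠ projL C (C j) ∧ r = ‖projL C (C i) - projL C (C j)‖}

/-- The desingularization at time `t`: the obstacles `C 0, C 1` stay put and the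
`j`-th robot `x_j = C (j+1)` is shifted by `t·j·ε̄(C)` along `e_C`. -/
def desing (C : Fin (n + 2) → EuclideanSpace ℝ (Fin d)) (t : ℝ) :
    Fin (n + 2) → EuclideanSpace ℝ (Fin d) :=
  fun i => C i + (if 2 ≤ (i : ℕ) then t * ((i : ℕ) - 1 : ℕ) * epsBar C else 0) • eDir C

end

section Aux

variable {d n : ℕ}

lemma desing_zero (C : Fin (n + 2) → EuclideanSpace ℝ (Fin d)) (t : ℝ) :
    desing C t 0 = C 0 := by
  simp [desing]

lemma desing_one (C : Fin (n + 2) → EuclideanSpace ℝ (Fin d)) (t : ℝ) :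
    desing C t 1 = C 1 := by
  simp [desing]

lemma eDir_desing (C : Fin (n + 2) → EuclideanSpace ℝ (Fin d)) (t : ℝ) :
    eDir (desing C t) = eDir C := by
  simp [eDir, desing_zero, desing_one]

lemma projL_desing (C : Fin (n + 2) → EuclideanSpace ℝ (Fin d)) (t : ℝ)
    (x : EuclideanSpace ℝ (Fin d)) :
    projL (desing C t) x = projL C x := by
  simp [projL, eDir_desing, desing_zero]

lemma norm_eDir (C : Fin (n + 2) → EuclideanSpace ℝ (Fin d)) (h : C 0 ≠ C 1) :
    ‖eDir C‖ = 1 := by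
  have h' : C 1 - C 0 ≠ 0 := sub_ne_zero.mpr (Ne.symm h)
  have hn : ‖C 1 - C 0‖ ≠ 0 := norm_ne_zero_iff.mpr h'
  simp [eDir, norm_smul, abs_of_nonneg (inv_nonneg.mpr (norm_nonneg _)),
    inv_mul_cancel₀ hn]

lemma inner_eDir_self (C : Fin (n + 2) → EuclideanSpace ℝ (Fin d)) (h : C 0 ≠ C 1) :
    ⟪eDir C, eDir C⟫ = 1 := by
  have := norm_eDir C h
  rw [real_inner_self_eq_norm_sq, this]; norm_num

lemma projL_add_smul (C : Fin (n + 2) → EuclideanSpace ℝ (Fin d)) (h : C 0 ≠ C 1)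
    (x : EuclideanSpace ℝ (Fin d)) (s : ℝ) :
    projL C (x + s • eDir C) = projL C x + s • eDir C := by
  have hx : x + s • eDir C - C 0 = (x - C 0) + s • eDir C := by abel
  rw [projL, projL, hx, inner_add_left, real_inner_smul_left, inner_eDir_self C h]
  rw [mul_one, add_smul]
  abel

lemma projL_pt_zero (C : Fin (n + 2) → EuclideanSpace ℝ (Fin d)) :
    projL C (C 0) = C 0 := by
  simp [projL]

lemma projL_pt_one (C : Fin (n + 2) → EuclideanSpace ℝ (Fin d)) (h : C 0 ≠ C 1) :
    projL C (C 1) = C 1 := by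
  have h' : C 1 - C 0 ≠ 0 := sub_ne_zero.mpr (Ne.symm h)
  have hn : ‖C 1 - C 0‖ ≠ 0 := norm_ne_zero_iff.mpr h'
  rw [projL, eDir, real_inner_smul_right, real_inner_self_eq_norm_sq]
  rw [smul_smul]
  have : ‖C 1 - C 0‖⁻¹ * ‖C 1 - C 0‖ ^ 2 * ‖C 1 - C 0‖⁻¹ = 1 := by
    field_simp
  rw [this, one_smul]
  abel

/-- The set of distances between distinct projections. -/
def distSet (C : Fin (n + 2) → EuclideanSpace ℝ (Fin d)) : Set ℝ :=
  {r : ℝ | ∃ i j : Fin (n + 2),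
      projL C (C i) ≠ projL C (C j) ∧ r = ‖projL C (C i) - projL C (C j)‖}

lemma zero_ne_one_fin : (0 : Fin (n + 2)) ≠ 1 := by
  simp [Fin.ext_iff]

lemma distSet_nonempty (C : Fin (n + 2) → EuclideanSpace ℝ (Fin d)) (h : C 0 ≠ C 1) :
    (distSet C).Nonempty := by
  refine ⟨‖projL C (C 0) - projL C (C 1)‖, 0, 1, ?_, rfl⟩
  rw [projL_pt_zero, projL_pt_one C h]
  exact h

lemma distSet_finite (C : Fin (n + 2) → EuclideanSpace ℝ (Fin d)) :
    (distSet C).Finite := by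
  apply Set.Finite.subset
    (Set.finite_range fun p : Fin (n + 2) × Fin (n + 2) =>
      ‖projL C (C p.1) - projL C (C p.2)‖)
  rintro r ⟨i, j, -, rfl⟩
  exact ⟨(i, j), rfl⟩

lemma distSet_bddBelow (C : Fin (n + 2) → EuclideanSpace ℝ (Fin d)) :
    BddBelow (distSet C) := by
  refine ⟨0, ?_⟩
  rintro r ⟨i, j, -, rfl⟩
  exact norm_nonneg _

lemma sInf_distSet_pos (C : Fin (n + 2) → EuclideanSpace ℝ (Fin d)) (h : C 0 ≠ C 1) :
    0 < sInf (distSet C) := by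
  have hmem := Set.Nonempty.csInf_mem (distSet_nonempty C h) (distSet_finite C)
  obtain ⟨i, j, hij, heq⟩ := hmem
  rw [heq]
  exact norm_pos_iff.mpr (sub_ne_zero.mpr hij)

lemma epsBar_pos (C : Fin (n + 2) → EuclideanSpace ℝ (Fin d)) (h : C 0 ≠ C 1) :
    0 < epsBar C := by
  have := sInf_distSet_pos C h
  have hn : (0 : ℝ) < n + 2 := by positivity
  rw [epsBar]
  exact mul_pos (by positivity) this

lemma sInf_distSet_le (C : Fin (n + 2) → EuclideanSpace ℝ (Fin d))
    {i j : Fin (n + 2)} (hij : projL C (C i) ≠ projL C (C j)) :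
    sInf (distSet C) ≤ ‖projL C (C i) - projL C (C j)‖ :=
  csInf_le (distSet_bddBelow C) ⟨i, j, hij, rfl⟩

lemma sInf_distSet_eq (C : Fin (n + 2) → EuclideanSpace ℝ (Fin d)) :
    sInf (distSet C) = (n + 2 : ℝ) * epsBar C := by
  have hn : (n + 2 : ℝ) ≠ 0 := by positivity
  rw [epsBar]
  field_simp
  rfl

end Aux

/-- After the desingularization at time `t = 1`, all `n+2` projections onto the
line `L_C` are pairwise distinct, i.e. `c̄p(F(C,1)) = n+2`. -/
theorem desing_separates_projections (d n : ℕ)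
    (C : Fin (n + 2) → EuclideanSpace ℝ (Fin d))
    (hC : Function.Injective C) :
    Function.Injective (fun i => projL (desing C 1) (desing C 1 i)) ∧
    cp (desing C 1) = n + 2 := by
  classical
  have h01 : C 0 ≠ C 1 := fun h => zero_ne_one_fin (hC h)
  have hε : 0 < epsBar C := epsBar_pos C h01
  -- the shift of index i
  set σ : Fin (n + 2) → ℝ :=
    fun i => if 2 ≤ (i : ℕ) then (1 : ℝ) * ((i : ℕ) - 1 : ℕ) * epsBar C else 0 with hσ
  have hproj : ∀ i, projL (desing C 1) (desing C 1 i) = projL C (C i) + σ i • eDir C := by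
    intro i
    rw [projL_desing]
    show projL C (C i + _ • eDir C) = _
    rw [projL_add_smul C h01]
  have hσ_nonneg : ∀ i, 0 ≤ σ i := by
    intro i
    rw [hσ]; dsimp only
    split
    · positivity
    · exact le_refl 0
  have hσ_le : ∀ i : Fin (n + 2), σ i ≤ (n : ℝ) * epsBar C := by
    intro i
    rw [hσ]; dsimp only
    split
    · rename_i hi
      have h1 : ((i : ℕ) - 1 : ℕ) ≤ n := by
        have := i.isLt; omega
      have h2 : (((i : ℕ) - 1 : ℕ) : ℝ) ≤ (n : ℝ) := by exact_mod_cast h1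
      rw [one_mul]
      exact mul_le_mul_of_nonneg_right h2 hε.le
    · positivity
  have hinj : Function.Injective (fun i => projL (desing C 1) (desing C 1 i)) := by
    intro i j h
    simp only [hproj] at h
    by_cases hp : projL C (C i) = projL C (C j)
    · -- equal projections; then shifts are equal
      rw [hp] at h
      have hσeq : σ i = σ j := by
        have he : eDir C ≠ 0 := by
          intro h0
          have := norm_eDir C h01
          rw [h0, norm_zero] at this
          norm_num at this
        have := add_left_cancel h
        exact smul_left_injective ℝ he this
      by_cases hi2 : 2 ≤ (i : ℕ) <;> by_cases hj2 : 2 ≤ (j : ℕ)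
      · -- both robots
        rw [hσ] at hσeq
        simp only [if_pos hi2, if_pos hj2, one_mul] at hσeq
        have := mul_right_cancel₀ (ne_of_gt hε) hσeq
        have hval : ((i : ℕ) - 1 : ℕ) = ((j : ℕ) - 1 : ℕ) := by exact_mod_cast this
        exact Fin.ext (by omega)
      · -- i robot, j obstacle: shift of i positive, of j zero
        exfalso
        rw [hσ] at hσeq
        simp only [if_pos hi2, if_neg hj2, one_mul] at hσeq
        have h1 : (1 : ℝ) ≤ (((i : ℕ) - 1 : ℕ) : ℝ) := by
          exact_mod_cast Nat.one_le_iff_ne_zero.mpr (by omega)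
        nlinarith
      · exfalso
        rw [hσ] at hσeq
        simp only [if_neg hi2, if_pos hj2, one_mul] at hσeq
        have h1 : (1 : ℝ) ≤ (((j : ℕ) - 1 : ℕ) : ℝ) := by
          exact_mod_cast Nat.one_le_iff_ne_zero.mpr (by omega)
        nlinarith
      · -- both obstacles
        have hcase : (i : ℕ) = (j : ℕ) ∨ ((i : ℕ) = 0 ∧ (j : ℕ) = 1) ∨
            ((i : ℕ) = 1 ∧ (j : ℕ) = 0) := by omega
        rcases hcase with hc | ⟨hi0, hj1⟩ | ⟨hi1, hj0⟩
        · exact Fin.ext hc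
        · exfalso
          have hi : i = 0 := Fin.ext (by simpa using hi0)
          have hj : j = 1 := Fin.ext (by simpa using hj1)
          rw [hi, hj, projL_pt_zero, projL_pt_one C h01] at hp
          exact h01 hp
        · exfalso
          have hi : i = 1 := Fin.ext (by simpa using hi1)
          have hj : j = 0 := Fin.ext (by simpa using hj0)
          rw [hi, hj, projL_pt_zero, projL_pt_one C h01] at hp
          exact h01 hp.symm
    · -- distinct projections: contradiction by distance bound
      exfalso
      have hdiff : projL C (C i) - projL C (C j) = (σ j - σ i) • eDir C := by
        have : projL C (C i) - projL C (C j) = σ j • eDir C - σ i • eDir C := by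
          have h' := h
          apply_fun (fun z => z - σ i • eDir C - projL C (C j)) at h'
          rw [show projL C (C i) + σ i • eDir C - σ i • eDir C - projL C (C j)
              = projL C (C i) - projL C (C j) by abel] at h'
          rw [h']
          abel
        rw [this, sub_smul]
      have hnorm : ‖projL C (C i) - projL C (C j)‖ = |σ j - σ i| := by
        rw [hdiff, norm_smul, norm_eDir C h01, mul_one, Real.norm_eq_abs]
      have habs : |σ j - σ i| ≤ (n : ℝ) * epsBar C := by
        rw [abs_le]
        constructor
        · have := hσ_le j; have := hσ_nonneg i; have := hσ_nonneg j
          have := hσ_le i; linarith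
        · have := hσ_le j; have := hσ_nonneg i; linarith
      have hlow := sInf_distSet_le C hp
      rw [sInf_distSet_eq] at hlow
      rw [hnorm] at hlow
      nlinarith
  refine ⟨hinj, ?_⟩
  rw [cp, Finset.card_image_of_injective _ hinj, Finset.card_univ, Fintype.card_fin]
end

section
/- With notation as in the desingularization: for every t ∈ [0,1], the tuple (o₁, o₂, z̄₁(C,t), …, z̄_n(C,t)) with z̄_j(C,t) = x_j + t·j·ε̄(C)·e_C belongs to F(ℝ^d, n+2); i.e. shifting the j-th robot by t·j·ε̄(C) along e_C never creates a collision among the robots or with the obstacles. -/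
open scoped RealInnerProductSpace

/-!
If two entries of `desing C t` collide, then `C i - C j` is a nonzero multiple `c • e_C` of the
unit vector `e_C`, so the projections of `C i` and `C j` onto the line differ by exactly `|c|`,
which is therefore at least `(n + 2) ε̄(C)`. But every shift lies in `[0, n ε̄(C)]`, so
`|c| ≤ n ε̄(C)`; with `ε̄(C) ≥ 0` this forces `c = 0`, a contradiction.
-/

section Desingularization

variable {d n : ℕ} (C : Fin (n + 2) → EuclideanSpace ℝ (Fin d))

lemma norm_eDir_s9 (h01 : C 1 ≠ C 0) : ‖eDir C‖ = 1 :=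
  norm_smul_inv_norm (sub_ne_zero.mpr h01)

lemma projL_sub_projL (x y : EuclideanSpace ℝ (Fin d)) :
    projL C x - projL C y = ⟪x - y, eDir C⟫ • eDir C := by
  simp only [projL, add_sub_add_left_eq_sub, ← sub_smul, ← inner_sub_left,
    sub_sub_sub_cancel_right]

lemma projL_sub_projL_of_sub_eq_smul (h01 : C 1 ≠ C 0) {x y : EuclideanSpace ℝ (Fin d)}
    {c : ℝ} (h : x - y = c • eDir C) : projL C x - projL C y = c • eDir C := by
  rw [projL_sub_projL, h, real_inner_smul_left, real_inner_self_eq_norm_sq, norm_eDir_s9 C h01,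
    one_pow, mul_one]

lemma epsBar_nonneg : 0 ≤ epsBar C := by
  refine mul_nonneg (by positivity) (Real.sInf_nonneg ?_)
  rintro r ⟨i, j, -, rfl⟩
  exact norm_nonneg _

lemma add_two_mul_epsBar_le {i j : Fin (n + 2)} (h : projL C (C i) ≠ projL C (C j)) :
    (n + 2) * epsBar C ≤ ‖projL C (C i) - projL C (C j)‖ := by
  rw [epsBar, ← mul_assoc, mul_one_div_cancel (by positivity), one_mul]
  refine csInf_le ⟨0, ?_⟩ ⟨i, j, h, rfl⟩
  rintro r ⟨i, j, -, rfl⟩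
  exact norm_nonneg _

noncomputable def desingShift (t : ℝ) (i : Fin (n + 2)) : ℝ :=
  if 2 ≤ (i : ℕ) then t * ((i : ℕ) - 1 : ℕ) * epsBar C else 0

lemma desing_apply (t : ℝ) (i : Fin (n + 2)) :
    desing C t i = C i + desingShift C t i • eDir C :=
  rfl

lemma desingShift_mem_Icc {t : ℝ} (ht : t ∈ Set.Icc (0 : ℝ) 1) (i : Fin (n + 2)) :
    desingShift C t i ∈ Set.Icc 0 (n * epsBar C) := by
  have hε := epsBar_nonneg C
  unfold desingShift
  split_ifs
  · have hi : (((i : ℕ) - 1 : ℕ) : ℝ) ≤ n := by exact_mod_cast (by omega : (i : ℕ) - 1 ≤ n)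
    refine ⟨by have := ht.1; positivity, ?_⟩
    calc t * (((i : ℕ) - 1 : ℕ) : ℝ) * epsBar C ≤ 1 * n * epsBar C := by
          gcongr
          exact ht.2
    _ = n * epsBar C := by rw [one_mul]
  · exact ⟨le_rfl, by positivity⟩

end Desingularization

/-- For every `t ∈ [0,1]` the desingularized tuple
`(o₁, o₂, z̄₁(C,t), …, z̄_n(C,t))` (with `z̄_j(C,t) = x_j + t·j·ε̄(C)·e_C`)
still lies in `F(ℝ^d, n+2)`: no collisions are created. -/
theorem desing_injective (d n : ℕ)
    (C : Fin (n + 2) → EuclideanSpace ℝ (Fin d))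
    (hC : Function.Injective C) :
    ∀ t ∈ Set.Icc (0 : ℝ) 1, Function.Injective (desing C t) := by
  intro t ht i j hij
  set c := desingShift C t j - desingShift C t i
  have h01 : C 1 ≠ C 0 := hC.ne one_ne_zero
  have hsub : C i - C j = c • eDir C := by
    rw [desing_apply, desing_apply] at hij
    rw [sub_smul, sub_eq_sub_iff_add_eq_add, hij, add_comm]
  by_cases hc : c = 0
  · exact hC (sub_eq_zero.mp (by rw [hsub, hc, zero_smul]))
  exfalso
  have hproj := projL_sub_projL_of_sub_eq_smul C h01 hsub
  have hgap : ‖projL C (C i) - projL C (C j)‖ = |c| := by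
    rw [hproj, norm_smul, norm_eDir_s9 C h01, mul_one, Real.norm_eq_abs]
  have hne : projL C (C i) ≠ projL C (C j) := fun h => by
    rw [← sub_eq_zero, ← norm_eq_zero, hgap] at h
    exact hc (abs_eq_zero.mp h)
  have hshift : |c| ≤ n * epsBar C :=
    abs_sub_le_of_nonneg_of_le (desingShift_mem_Icc C ht j).1 (desingShift_mem_Icc C ht j).2
      (desingShift_mem_Icc C ht i).1 (desingShift_mem_Icc C ht i).2
  have hlower := add_two_mul_epsBar_le C hne
  nlinarith [epsBar_nonneg C, abs_pos.mpr hc]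
end

section
/- The function ε̄ : A_i → ℝ, ε̄(C) = (1/(n+2)) · min{ |p_C(y_r) − p_C(y_s)| : p_C(y_r) ≠ p_C(y_s) } (y₁=o₁, y₂=o₂, y_{k+2}=x_k), is continuous and strictly positive on each set A_i = {C ∈ F(ℝ^d,n+2) : c̄p(C) = i}, for any 2 ≤ i ≤ n+2. -/
open scoped RealInnerProductSpace

/-- The ordered configuration space `F(ℝ^d, n+2)`, as a subspace of `(ℝ^d)^{n+2}`. -/
abbrev ConfSp (d n : ℕ) :=
  {C : Fin (n + 2) → EuclideanSpace ℝ (Fin d) // Function.Injective C}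

/-!
On the stratum `A_i` the set of index pairs whose projections differ is locally constant:
pairs separated at `C₀` stay separated nearby by continuity, and since the number `i` of
distinct projections is fixed, no further pair can become separated. Hence near `C₀` the
minimum positive gap is a minimum of finitely many continuous functions over a fixed index
set.
-/

open Finset Filter Topology

theorem Function.FactorsThrough.symm_of_card_image_eq {α β γ : Type*} [Fintype α]
    [DecidableEq β] [DecidableEq γ] {f : α → β} {g : α → γ} (hgf : g.FactorsThrough f)
    (hcard : #(univ.image g) = #(univ.image f)) : f.FactorsThrough g := by
  set graph : Finset (β × γ) := univ.image fun a => (f a, g a)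
  have hfst : graph.image Prod.fst = univ.image f := by rw [image_image]; rfl
  have hsnd : graph.image Prod.snd = univ.image g := by rw [image_image]; rfl
  have hfst_inj : Set.InjOn Prod.fst (graph : Set (β × γ)) := by
    simp only [Set.InjOn, graph, coe_image, coe_univ, Set.image_univ, Set.mem_range]
    rintro _ ⟨a, rfl⟩ _ ⟨b, rfl⟩ hab
    exact Prod.ext hab (hgf hab)
  have hsnd_inj : Set.InjOn Prod.snd (graph : Set (β × γ)) := by
    apply injOn_of_card_image_eq
    rw [hsnd, hcard, ← hfst, card_image_of_injOn hfst_inj]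
  intro a b hab
  exact congrArg Prod.fst
    (hsnd_inj (mem_image_of_mem _ (mem_univ a)) (mem_image_of_mem _ (mem_univ b)) hab)

open Classical in
noncomputable def sepPairs {ι E : Type*} [Fintype ι] (y : ι → E) : Finset (ι × ι) :=
  univ.filter fun p => y p.1 ≠ y p.2

noncomputable def minGap {ι E : Type*} [Norm E] [Sub E] (y : ι → E) : ℝ :=
  sInf {r : ℝ | ∃ i j : ι, y i ≠ y j ∧ r = ‖y i - y j‖}

section MinGap

variable {ι E X : Type*} [Fintype ι]

theorem mem_sepPairs {y : ι → E} {p : ι × ι} : p ∈ sepPairs y ↔ y p.1 ≠ y p.2 := by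
  simp [sepPairs]

theorem minGap_eq_sInf_image [Norm E] [Sub E] (y : ι → E) :
    minGap y = sInf ((fun p : ι × ι => ‖y p.1 - y p.2‖) '' sepPairs y) := by
  rw [minGap]
  congr 1
  ext r
  simp only [Set.mem_ofPred_eq, Set.mem_image, mem_coe, mem_sepPairs, Prod.exists]
  constructor <;> exact fun ⟨i, j, hij, hr⟩ => ⟨i, j, hij, hr.symm⟩

theorem sepPairs_nonempty [DecidableEq E] {y : ι → E} (hy : 1 < #(univ.image y)) :
    (sepPairs y).Nonempty := by
  obtain ⟨_, ha, _, hb, hab⟩ := one_lt_card.1 hy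
  obtain ⟨i, -, rfl⟩ := mem_image.1 ha
  obtain ⟨j, -, rfl⟩ := mem_image.1 hb
  exact ⟨(i, j), mem_sepPairs.2 hab⟩

theorem minGap_pos [NormedAddCommGroup E] [DecidableEq E] {y : ι → E}
    (hy : 1 < #(univ.image y)) : 0 < minGap y := by
  have hne := sepPairs_nonempty hy
  rw [minGap_eq_sInf_image, ← inf'_eq_csInf_image _ hne, lt_inf'_iff]
  exact fun p hp => norm_pos_iff.2 (sub_ne_zero.2 (mem_sepPairs.1 hp))

theorem sepPairs_eq_of_card_image_eq [DecidableEq E] {y y₀ : ι → E}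
    (hsep : ∀ p ∈ sepPairs y₀, y p.1 ≠ y p.2)
    (hcard : #(univ.image y) = #(univ.image y₀)) : sepPairs y = sepPairs y₀ := by
  have hy₀y : y₀.FactorsThrough y := fun i j hij => by
    by_contra hne
    exact hsep (i, j) (mem_sepPairs.2 hne) hij
  have hyy₀ := hy₀y.symm_of_card_image_eq hcard.symm
  ext p
  simp only [mem_sepPairs]
  exact ⟨fun h h₀ => h (hyy₀ h₀), fun h₀ h => h₀ (hy₀y h)⟩

theorem continuous_sInf_image_finset [TopologicalSpace X] {α : Type*} (S : Finset α)
    {g : X → α → ℝ} (hg : ∀ a ∈ S, Continuous (g · a)) :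
    Continuous fun x => sInf (g x '' S) := by
  rcases S.eq_empty_or_nonempty with rfl | hne
  · simpa using continuous_const
  · simp_rw [← inf'_eq_csInf_image _ hne]
    exact Continuous.finset_inf'_apply hne hg

theorem continuousOn_minGap [NormedAddCommGroup E] [DecidableEq E] [TopologicalSpace X]
    {f : X → ι → E} (hf : Continuous f) (k : ℕ) :
    ContinuousOn (fun x => minGap (f x)) {x | #(univ.image (f x)) = k} := by
  intro x₀ hx₀
  set S := sepPairs (f x₀)
  have hf_apply (i : ι) : Continuous (f · i) := (continuous_apply i).comp hf
  have hsep : ∀ᶠ x in 𝓝 x₀, ∀ p ∈ S, f x p.1 ≠ f x p.2 :=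
    (eventually_all_finset S).2 fun p hp =>
      (isOpen_ne_fun (hf_apply p.1) (hf_apply p.2)).mem_nhds (mem_sepPairs.1 hp)
  have hgap := continuous_sInf_image_finset S (g := fun x p => ‖f x p.1 - f x p.2‖)
    fun p _ => ((hf_apply p.1).sub (hf_apply p.2)).norm
  refine hgap.continuousWithinAt.congr_of_eventuallyEq ?_ (minGap_eq_sInf_image _)
  filter_upwards [self_mem_nhdsWithin, nhdsWithin_le_nhds hsep] with x hx hxsep
  rw [minGap_eq_sInf_image, sepPairs_eq_of_card_image_eq hxsep (hx.trans hx₀.symm)]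

end MinGap

section Configuration

variable {d n : ℕ}

theorem continuous_apply_val (k : Fin (n + 2)) : Continuous fun C : ConfSp d n => C.1 k :=
  (continuous_apply k).comp continuous_subtype_val

theorem continuous_eDir : Continuous fun C : ConfSp d n => eDir C.1 := by
  have hsub := (continuous_apply_val (d := d) (n := n) 1).sub (continuous_apply_val 0)
  have hne (C : ConfSp d n) : C.1 1 - C.1 0 ≠ 0 := sub_ne_zero.2 (C.2.ne (by simp))
  exact (hsub.norm.inv₀ fun C => norm_ne_zero_iff.2 (hne C)).smul hsub

theorem continuous_projL_apply (k : Fin (n + 2)) :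
    Continuous fun C : ConfSp d n => projL C.1 (C.1 k) := by
  unfold projL
  exact (continuous_apply_val 0).add
    ((((continuous_apply_val k).sub (continuous_apply_val 0)).inner (𝕜 := ℝ)
      continuous_eDir).smul continuous_eDir)

theorem cp_eq_card_image [DecidableEq (EuclideanSpace ℝ (Fin d))]
    (C : Fin (n + 2) → EuclideanSpace ℝ (Fin d)) :
    cp C = #(univ.image fun k => projL C (C k)) := by
  unfold cp
  convert rfl

theorem epsBar_eq_mul_minGap (C : Fin (n + 2) → EuclideanSpace ℝ (Fin d)) :
    epsBar C = (1 / (n + 2 : ℝ)) * minGap fun k => projL C (C k) :=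
  rfl

end Configuration

theorem epsBar_pos_continuousOn_general (d n : ℕ) (i : ℕ) (hi₂ : 2 ≤ i) :
    (∀ C : ConfSp d n, cp C.1 = i → 0 < epsBar C.1) ∧
    ContinuousOn (fun C : ConfSp d n => epsBar C.1) {C | cp C.1 = i} := by
  classical
  simp_rw [epsBar_eq_mul_minGap, cp_eq_card_image]
  refine ⟨fun C hC => mul_pos (by positivity) (minGap_pos (by omega)), ?_⟩
  exact continuousOn_const.mul
    (continuousOn_minGap (continuous_pi continuous_projL_apply) i)

/-- On each stratum `A_i = {C : c̄p(C) = i}` (`2 ≤ i ≤ n+2`), the function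
`ε̄(C) = (1/(n+2))·min{‖p_C(y_r) − p_C(y_s)‖ : p_C(y_r) ≠ p_C(y_s)}` is
well defined, strictly positive and continuous. -/
theorem epsBar_pos_continuousOn (d n : ℕ) (i : ℕ) (hi₂ : 2 ≤ i) (hi : i ≤ n + 2) :
    (∀ C : ConfSp d n, cp C.1 = i → 0 < epsBar C.1) ∧
    ContinuousOn (fun C : ConfSp d n => epsBar C.1) {C | cp C.1 = i} :=
  epsBar_pos_continuousOn_general d n i hi₂
end

section
/- Let p : E → B be a fibration and suppose there is a continuous section s : E ×_B E → E^{[0,1]}_B of the evaluation map Π(γ) = (γ(0),γ(1)) defined on all of E ×_B E, where E^{[0,1]}_B is the space of paths in E whose composite with p is constant. If E ×_B E has the homotopy type of a CW complex, then each fiber X of p is contractible. -/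
universe u

open unitInterval

/-! The December 2024 Mathlib notion `RelativeCWComplex` (no longer in Mathlib), restated. -/

namespace RelativeCWComplex

/-- The `n`-sphere, as the unit sphere in `ℝ^(n+1)`. -/
noncomputable def sphere (n : ℤ) : TopCat.{u} :=
  TopCat.of <| ULift <| Metric.sphere (0 : EuclideanSpace ℝ <| Fin <| Int.toNat <| n + 1) 1

/-- The `n`-disk, as the closed unit ball in `ℝ^n`. -/
noncomputable def disk (n : ℤ) : TopCat.{u} :=
  TopCat.of <| ULift <| Metric.closedBall (0 : EuclideanSpace ℝ <| Fin <| Int.toNat n) 1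

/-- The inclusion of the boundary sphere into the disk. -/
noncomputable def sphereInclusion (n : ℤ) : sphere.{u} n ⟶ disk.{u} (n + 1) :=
  TopCat.ofHom ⟨fun x => ⟨⟨x.down.1, le_of_eq x.down.2⟩⟩,
    Homeomorph.ulift.symm.continuous.comp
      ((continuous_subtype_val.comp Homeomorph.ulift.continuous).subtype_mk _)⟩

/-- Attaching generalized cells along `f` to `X` gives `X'`. -/
structure AttachGeneralizedCells {S D : TopCat.{u}} (f : S ⟶ D) (X X' : TopCat.{u}) where
  cells : Type u
  attachMaps : cells → (S ⟶ X)
  iso_pushout : X' ≅ CategoryTheory.Limits.pushout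
    (CategoryTheory.Limits.Sigma.desc attachMaps)
    (CategoryTheory.Limits.Sigma.map fun _ => f)

/-- Attaching `(n+1)`-disks along their boundary spheres. -/
def AttachCells (n : ℤ) := AttachGeneralizedCells (sphereInclusion.{u} n)

end RelativeCWComplex

/-- A relative CW complex (December 2024 Mathlib definition). -/
structure RelativeCWComplex where
  sk : ℕ → TopCat.{u}
  attachCells (n : ℕ) : RelativeCWComplex.AttachCells.{u} ((n : ℤ) - 1) (sk n) (sk (n + 1))

namespace RelativeCWComplex

/-- The inclusion of a skeleton into the next one. -/
noncomputable def skInclusion (X : RelativeCWComplex.{u}) (n : ℕ) : X.sk n ⟶ X.sk (n + 1) :=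
  CategoryTheory.CategoryStruct.comp (CategoryTheory.Limits.pushout.inl _ _)
    (X.attachCells n).iso_pushout.inv

/-- The topological space underlying a relative CW complex (colimit of its skeleta). -/
noncomputable def toTopCat (X : RelativeCWComplex.{u}) : TopCat.{u} :=
  CategoryTheory.Limits.colimit (CategoryTheory.Functor.ofSequence (skInclusion X))

end RelativeCWComplex

/-!
Lifting a path from `p e` to `b` shows that every fiber of the fibration is nonempty. Once a
point `x₀` of the fiber over `b` is fixed, `x ↦ s (x, x₀)` is a path from `x` to `x₀` lying in that
fiber and depending continuously on `x`, i.e. a contraction of the fiber.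
-/

def HasHomotopyLifting {E B : Type u} [TopologicalSpace E] [TopologicalSpace B]
    (p : E → B) : Prop :=
  ∀ (Y : Type u) [TopologicalSpace Y] (G : C(Y × I, B)) (g : C(Y, E)),
    (∀ y, p (g y) = G (y, 0)) → ∃ G' : C(Y × I, E), (∀ y, G' (y, 0) = g y) ∧ ∀ z, p (G' z) = G z

theorem HasHomotopyLifting.surjective {E B : Type u} [TopologicalSpace E] [TopologicalSpace B]
    [PathConnectedSpace B] [Nonempty E] {p : E → B} (hp : HasHomotopyLifting p) :
    Function.Surjective p := by
  intro b
  obtain ⟨e⟩ := ‹Nonempty E›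
  let γ : Path (p e) b := PathConnectedSpace.somePath _ _
  obtain ⟨G', -, hG'⟩ := hp PUnit ⟨fun z => γ z.2, by fun_prop⟩ (ContinuousMap.const _ e)
    (fun _ => by simp)
  exact ⟨G' (PUnit.unit, 1), by simpa using hG' (PUnit.unit, 1)⟩

section GlobalSection

variable {E B : Type*} [TopologicalSpace E] [TopologicalSpace B] {p : E → B} {b : B}

def fiberPairWith (x₀ : p ⁻¹' {b}) : C(p ⁻¹' {b}, {q : E × E // p q.1 = p q.2}) where
  toFun x := ⟨((x : E), (x₀ : E)), x.2.trans x₀.2.symm⟩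
  continuous_toFun := by fun_prop

variable (s : C({q : E × E // p q.1 = p q.2}, C(I, E)))
  (hs : ∀ q, s q 0 = q.1.1 ∧ s q 1 = q.1.2 ∧ ∀ t : I, p (s q t) = p q.1.1)

def fiberContraction (x₀ : p ⁻¹' {b}) :
    ContinuousMap.Homotopy (ContinuousMap.id (p ⁻¹' {b})) (ContinuousMap.const _ x₀) where
  toFun z := ⟨s (fiberPairWith x₀ z.2) z.1, ((hs _).2.2 z.1).trans z.2.2⟩
  continuous_toFun :=
    (s.uncurry.continuous.comp
      (((fiberPairWith x₀).continuous.comp continuous_snd).prodMk continuous_fst)).subtype_mk _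
  map_zero_left _ := Subtype.ext (hs _).1
  map_one_left _ := Subtype.ext (hs _).2.1

end GlobalSection

theorem fiber_contractible_of_global_section_general
    {E B : Type u} [TopologicalSpace E] [TopologicalSpace B]
    [PathConnectedSpace B] [Nonempty E]
    (p : E → B)
    -- `p` is a (Hurewicz) fibration: it has the homotopy lifting property
    (hfib : ∀ (Y : Type u) [TopologicalSpace Y] (G : C(Y × I, B)) (g : C(Y, E)),
      (∀ y, p (g y) = G (y, 0)) →
      ∃ G' : C(Y × I, E), (∀ y, G' (y, 0) = g y) ∧ ∀ z, p (G' z) = G z)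
    -- a global continuous parametrised motion planning algorithm:
    -- a continuous section of `Π` defined on all of `E ×_B E`
    (s : C({q : E × E // p q.1 = p q.2}, C(I, E)))
    (hs : ∀ q, s q 0 = q.1.1 ∧ s q 1 = q.1.2 ∧ ∀ t : I, p (s q t) = p q.1.1) :
    ∀ b : B, ContractibleSpace (p ⁻¹' {b} : Set E) := by
  intro b
  obtain ⟨x₀, hx₀⟩ := HasHomotopyLifting.surjective hfib b
  exact (contractible_iff_id_nullhomotopic _).mpr
    ⟨⟨x₀, hx₀⟩, ⟨fiberContraction s hs ⟨x₀, hx₀⟩⟩⟩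

/-- Cohen–Farber–Weinberger, Proposition 4.5: if the evaluation fibration
`Π : E^{[0,1]}_B → E ×_B E`, `Π(γ) = (γ(0),γ(1))`, admits a global continuous
section and `E ×_B E` has the homotopy type of a CW complex, then the fibers of
the fibration `p : E → B` are contractible. -/
theorem fiber_contractible_of_global_section
    {E B : Type u} [TopologicalSpace E] [TopologicalSpace B]
    [PathConnectedSpace B] [Nonempty E]
    (p : E → B) (hp : Continuous p)
    -- `p` is a (Hurewicz) fibration: it has the homotopy lifting property
    (hfib : ∀ (Y : Type u) [TopologicalSpace Y] (G : C(Y × I, B)) (g : C(Y, E)),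
      (∀ y, p (g y) = G (y, 0)) →
      ∃ G' : C(Y × I, E), (∀ y, G' (y, 0) = g y) ∧ ∀ z, p (G' z) = G z)
    -- `E ×_B E` has the homotopy type of a CW complex
    (hCW : ∃ X : RelativeCWComplex.{u},
      Nonempty (ContinuousMap.HomotopyEquiv {q : E × E // p q.1 = p q.2}
        X.toTopCat))
    -- a global continuous parametrised motion planning algorithm:
    -- a continuous section of `Π` defined on all of `E ×_B E`
    (s : C({q : E × E // p q.1 = p q.2}, C(I, E)))
    (hs : ∀ q, s q 0 = q.1.1 ∧ s q 1 = q.1.2 ∧ ∀ t : I, p (s q t) = p q.1.1) :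
    ∀ b : B, ContractibleSpace (p ⁻¹' {b} : Set E) :=
  fiber_contractible_of_global_section_general p hfib s hs
end

section
/- Constructing sections via parametrised deformations: let p : E → B be a fibration, U, V ⊆ E ×_B E, s_U : U → E^{[0,1]}_B a continuous section of the evaluation map Π over U, and H = (h₁,h₂) : V × [0,1] → E × E a homotopy with H(v,0) = v, H(v,1) ∈ U, and such that for each v ∈ V the paths t ↦ h₁(v,t) and t ↦ h₂(v,t) lie in E^{[0,1]}_B (i.e. project to constant paths in B). Then the formula s_V(v)(τ) = h₁(v,3τ) for τ ∈ [0,1/3], s_V(v)(τ) = s_U(H(v,1))(3τ−1) for τ ∈ [1/3,2/3], s_V(v)(τ) = h₂(v,3−3τ) for τ ∈ [2/3,1], defines a continuous section s_V : V → E^{[0,1]}_B of Π over V. -/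
open Set Function

/-! `s_V` is the concatenation, at triple speed, of three families of paths parametrised by `V`:
the first coordinate of the deformation, the section `s_U` at the endpoint `H(v,1) ∈ U`, and the
reversed second coordinate. Consecutive paths meet because `s_U` joins the two coordinates of
`H(v,1)`, and all three stay in the fibre over `p v.1` because `H` moves each coordinate inside
a fibre. Joint continuity follows by gluing along the relatively closed slices `τ = 1/3` and
`τ = 2/3` of `V × [0,1]`. -/

section PathFamily

variable {X Y : Type*}

noncomputable def pathFamilyTrans₃ (γ₁ γ₂ γ₃ : X → ℝ → Y) (x : X) (τ : ℝ) : Y :=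
  if τ ≤ 1 / 3 then γ₁ x (3 * τ) else if τ ≤ 2 / 3 then γ₂ x (3 * τ - 1) else γ₃ x (3 * τ - 2)

variable (γ₁ γ₂ γ₃ : X → ℝ → Y)

@[simp]
theorem pathFamilyTrans₃_zero (x : X) : pathFamilyTrans₃ γ₁ γ₂ γ₃ x 0 = γ₁ x 0 := by
  simp [pathFamilyTrans₃]

@[simp]
theorem pathFamilyTrans₃_one (x : X) : pathFamilyTrans₃ γ₁ γ₂ γ₃ x 1 = γ₃ x 1 := by
  norm_num [pathFamilyTrans₃]

theorem pathFamilyTrans₃_mem {x : X} {S : Set Y} (h₁ : ∀ t ∈ Icc (0 : ℝ) 1, γ₁ x t ∈ S)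
    (h₂ : ∀ t ∈ Icc (0 : ℝ) 1, γ₂ x t ∈ S) (h₃ : ∀ t ∈ Icc (0 : ℝ) 1, γ₃ x t ∈ S) :
    ∀ τ ∈ Icc (0 : ℝ) 1, pathFamilyTrans₃ γ₁ γ₂ γ₃ x τ ∈ S := by
  rintro τ ⟨h0, h1⟩
  unfold pathFamilyTrans₃
  split_ifs
  · exact h₁ _ ⟨by linarith, by linarith⟩
  · exact h₂ _ ⟨by linarith, by linarith⟩
  · exact h₃ _ ⟨by linarith, by linarith⟩

variable {γ₁ γ₂ γ₃} [TopologicalSpace X] [TopologicalSpace Y]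

theorem ContinuousOn.if_snd_le_of_prod_Icc {s : Set X} {a b c : ℝ} {f g : X × ℝ → Y}
    (hf : ContinuousOn f (s ×ˢ Icc a b)) (hg : ContinuousOn g (s ×ˢ Icc b c))
    (hfg : ∀ x ∈ s, f (x, b) = g (x, b)) :
    ContinuousOn (fun z => if z.2 ≤ b then f z else g z) (s ×ˢ Icc a c) := by
  refine ContinuousOn.if ?_ (hf.mono ?_) (hg.mono ?_)
  · rintro ⟨x, t⟩ ⟨⟨hx, -⟩, hfr⟩
    obtain rfl : t = b := frontier_le_subset_eq continuous_snd continuous_const hfr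
    exact hfg x hx
  · rw [(isClosed_le continuous_snd continuous_const).closure_eq]
    rintro ⟨x, t⟩ ⟨⟨hx, hat, -⟩, htb⟩
    exact ⟨hx, hat, htb⟩
  · simp only [not_le]
    rintro ⟨x, t⟩ ⟨⟨hx, -, htc⟩, hbt⟩
    exact ⟨hx, closure_lt_subset_le continuous_const continuous_snd hbt, htc⟩

theorem ContinuousOn.uncurry_comp_reparam {γ : X → ℝ → Y} {s : Set X} {t t' : Set ℝ}
    {φ : ℝ → ℝ} (hγ : ContinuousOn (uncurry γ) (s ×ˢ t)) (hφ : ContinuousOn φ t')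
    (hφt : MapsTo φ t' t) :
    ContinuousOn (fun z : X × ℝ => γ z.1 (φ z.2)) (s ×ˢ t') :=
  hγ.comp (continuousOn_id.prodMap hφ) ((mapsTo_id s).prodMap hφt)

theorem continuousOn_pathFamilyTrans₃ {s : Set X}
    (hγ₁ : ContinuousOn (uncurry γ₁) (s ×ˢ Icc 0 1))
    (hγ₂ : ContinuousOn (uncurry γ₂) (s ×ˢ Icc 0 1))
    (hγ₃ : ContinuousOn (uncurry γ₃) (s ×ˢ Icc 0 1))
    (h₁₂ : ∀ x ∈ s, γ₁ x 1 = γ₂ x 0) (h₂₃ : ∀ x ∈ s, γ₂ x 1 = γ₃ x 0) :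
    ContinuousOn (uncurry (pathFamilyTrans₃ γ₁ γ₂ γ₃)) (s ×ˢ Icc 0 1) := by
  have hpiece₁ : ContinuousOn (fun z : X × ℝ => γ₁ z.1 (3 * z.2)) (s ×ˢ Icc 0 (1 / 3)) :=
    hγ₁.uncurry_comp_reparam (φ := fun t => 3 * t) (by fun_prop)
      fun t ⟨h0, h1⟩ => ⟨by linarith, by linarith⟩
  have hpiece₂ : ContinuousOn (fun z : X × ℝ => γ₂ z.1 (3 * z.2 - 1))
      (s ×ˢ Icc (1 / 3) (2 / 3)) :=
    hγ₂.uncurry_comp_reparam (φ := fun t => 3 * t - 1) (by fun_prop)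
      fun t ⟨h0, h1⟩ => ⟨by linarith, by linarith⟩
  have hpiece₃ : ContinuousOn (fun z : X × ℝ => γ₃ z.1 (3 * z.2 - 2)) (s ×ˢ Icc (2 / 3) 1) :=
    hγ₃.uncurry_comp_reparam (φ := fun t => 3 * t - 2) (by fun_prop)
      fun t ⟨h0, h1⟩ => ⟨by linarith, by linarith⟩
  refine hpiece₁.if_snd_le_of_prod_Icc (hpiece₂.if_snd_le_of_prod_Icc hpiece₃ ?_) ?_
  · intro x hx
    norm_num [h₂₃ x hx]
  · intro x hx
    norm_num [h₁₂ x hx]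

end PathFamily

theorem section_via_parametrised_deformation_general
    {E B : Type*} [TopologicalSpace E] [TopologicalSpace B]
    (p : E → B)
    (U V : Set (E × E))
    (hV : ∀ q ∈ V, p q.1 = p q.2)
    -- the continuous section `s_U` over `U`
    (sU : E × E → ℝ → E)
    (hsUcont : ContinuousOn (fun z : (E × E) × ℝ => sU z.1 z.2) (U ×ˢ Icc 0 1))
    (hsU : ∀ q ∈ U, sU q 0 = q.1 ∧ sU q 1 = q.2 ∧
      ∀ t ∈ Icc (0 : ℝ) 1, p (sU q t) = p q.1)
    -- the parametrised deformation `H = (h₁, h₂)` of `V` into `U`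
    (H : E × E → ℝ → E × E)
    (hHcont : ContinuousOn (fun z : (E × E) × ℝ => H z.1 z.2) (V ×ˢ Icc 0 1))
    (hH0 : ∀ v ∈ V, H v 0 = v)
    (hH1 : ∀ v ∈ V, H v 1 ∈ U)
    (hH1const : ∀ v ∈ V, ∀ t ∈ Icc (0 : ℝ) 1, p (H v t).1 = p v.1)
    (hH2const : ∀ v ∈ V, ∀ t ∈ Icc (0 : ℝ) 1, p (H v t).2 = p v.2)
    -- the concatenated section `s_V` over `V`
    (sV : E × E → ℝ → E)
    (hsV : ∀ v τ, sV v τ =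
      if τ ≤ 1 / 3 then (H v (3 * τ)).1
      else if τ ≤ 2 / 3 then sU (H v 1) (3 * τ - 1)
      else (H v (3 - 3 * τ)).2) :
    (∀ v ∈ V, sV v 0 = v.1 ∧ sV v 1 = v.2 ∧
      ∀ τ ∈ Icc (0 : ℝ) 1, p (sV v τ) = p v.1) ∧
    ContinuousOn (fun z : (E × E) × ℝ => sV z.1 z.2) (V ×ˢ Icc 0 1) := by
  obtain rfl : sV = pathFamilyTrans₃ (fun v t => (H v t).1) (fun v t => sU (H v 1) t)
      (fun v t => (H v (1 - t)).2) := by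
    funext v τ
    rw [hsV, pathFamilyTrans₃, show 1 - (3 * τ - 2) = 3 - 3 * τ by ring]
  have hH1cont : ContinuousOn (fun v => H v 1) V :=
    hHcont.comp (continuousOn_id.prodMk continuousOn_const) fun v hv => ⟨hv, zero_le_one, le_rfl⟩
  have hγ₁ : ContinuousOn (fun z : (E × E) × ℝ => (H z.1 z.2).1) (V ×ˢ Icc 0 1) :=
    continuous_fst.comp_continuousOn hHcont
  have hγ₂ : ContinuousOn (fun z : (E × E) × ℝ => sU (H z.1 1) z.2) (V ×ˢ Icc 0 1) :=
    hsUcont.comp (hH1cont.prodMap continuousOn_id) (MapsTo.prodMap hH1 (mapsTo_id _))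
  have hγ₃ : ContinuousOn (fun z : (E × E) × ℝ => (H z.1 (1 - z.2)).2) (V ×ˢ Icc 0 1) :=
    (continuous_snd.comp_continuousOn hHcont).uncurry_comp_reparam (γ := fun v t => (H v t).2)
      (φ := fun t => 1 - t) (by fun_prop) fun t ⟨h0, h1⟩ => ⟨by linarith, by linarith⟩
  have hsUH (v) (hv : v ∈ V) := hsU _ (hH1 v hv)
  refine ⟨fun v hv => ⟨by simp [hH0 v hv], by simp [hH0 v hv], ?_⟩, ?_⟩
  · refine pathFamilyTrans₃_mem (S := {e | p e = p v.1}) _ _ _ (hH1const v hv)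
      (fun t ht => ?_) (fun t ⟨h0, h1⟩ => ?_)
    · exact ((hsUH v hv).2.2 t ht).trans (hH1const v hv 1 ⟨zero_le_one, le_rfl⟩)
    · exact (hH2const v hv _ ⟨by linarith, by linarith⟩).trans (hV v hv).symm
  · exact continuousOn_pathFamilyTrans₃ hγ₁ hγ₂ hγ₃ (fun v hv => (hsUH v hv).1.symm)
      (fun v hv => by simp [(hsUH v hv).2.1])

/-- Constructing parametrised motion planning algorithms via parametrised
deformations (Remark 2.5 of the paper).  Paths are modeled as maps `ℝ → E`
considered on `[0,1]`; a section over a set `U ⊆ E ×_B E` is a family of such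
paths, jointly continuous on `U × [0,1]`, joining the two endpoints and
projecting to a constant path in `B`. -/
theorem section_via_parametrised_deformation
    {E B : Type*} [TopologicalSpace E] [TopologicalSpace B]
    (p : E → B) (hp : Continuous p)
    (U V : Set (E × E))
    (hU : ∀ q ∈ U, p q.1 = p q.2) (hV : ∀ q ∈ V, p q.1 = p q.2)
    -- the continuous section `s_U` over `U`
    (sU : E × E → ℝ → E)
    (hsUcont : ContinuousOn (fun z : (E × E) × ℝ => sU z.1 z.2) (U ×ˢ Icc 0 1))
    (hsU : ∀ q ∈ U, sU q 0 = q.1 ∧ sU q 1 = q.2 ∧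
      ∀ t ∈ Icc (0 : ℝ) 1, p (sU q t) = p q.1)
    -- the parametrised deformation `H = (h₁, h₂)` of `V` into `U`
    (H : E × E → ℝ → E × E)
    (hHcont : ContinuousOn (fun z : (E × E) × ℝ => H z.1 z.2) (V ×ˢ Icc 0 1))
    (hH0 : ∀ v ∈ V, H v 0 = v)
    (hH1 : ∀ v ∈ V, H v 1 ∈ U)
    (hH1const : ∀ v ∈ V, ∀ t ∈ Icc (0 : ℝ) 1, p (H v t).1 = p v.1)
    (hH2const : ∀ v ∈ V, ∀ t ∈ Icc (0 : ℝ) 1, p (H v t).2 = p v.2)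
    -- the concatenated section `s_V` over `V`
    (sV : E × E → ℝ → E)
    (hsV : ∀ v τ, sV v τ =
      if τ ≤ 1 / 3 then (H v (3 * τ)).1
      else if τ ≤ 2 / 3 then sU (H v 1) (3 * τ - 1)
      else (H v (3 - 3 * τ)).2) :
    (∀ v ∈ V, sV v 0 = v.1 ∧ sV v 1 = v.2 ∧
      ∀ τ ∈ Icc (0 : ℝ) 1, p (sV v τ) = p v.1) ∧
    ContinuousOn (fun z : (E × E) × ℝ => sV z.1 z.2) (V ×ˢ Icc 0 1) :=
  section_via_parametrised_deformation_general p U V hV sU hsUcont hsU H hHcont hH0 hH1 hH1const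
    hH2const sV hsV
end

section
/- Repacking regions of continuity: let Y be a topological space covered by subsets T_{ij}, 2 ≤ i,j ≤ n+2, such that the closure of T_{ij} in Y is contained in ⋃_{r ≤ i, s ≤ j} T_{rs}. For ℓ = 4,…,2n+4 set W_ℓ = ⋃_{i+j=ℓ} T_{ij}. Then the sets assembling each W_ℓ are topologically disjoint: if i+j = i′+j′ = ℓ and (i,j) ≠ (i′,j′), then (closure of T_{ij} in Y) ∩ T_{i′j′} = ∅. Consequently, if each T_{ij} admits a continuous map f_{ij} : T_{ij} → Z, the map W_ℓ → Z defined piecewise by the f_{ij} with i+j = ℓ is continuous, and the W_ℓ form a cover of Y by 2n+1 sets. -/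
open Set

/-- Repacking regions of continuity.  Let `Y` be covered by pairwise disjoint
sets `T i j`, `2 ≤ i,j ≤ n+2`, with `closure (T i j) ⊆ ⋃_{r ≤ i, s ≤ j} T r s`.
Then for `i+j = i′+j′` and `(i,j) ≠ (i′,j′)` the closure of `T i j` misses
`T i′ j′`; consequently any map agreeing on each `T i j` with a map continuous
on `T i j` is continuous on each `W ℓ = ⋃_{i+j=ℓ} T i j`, and the `2n+1` sets
`W 4, …, W (2n+4)` cover `Y`. -/
theorem repacking_regions_of_continuity
    {Y Z : Type*} [TopologicalSpace Y] [TopologicalSpace Z] (n : ℕ)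
    (T : ℕ → ℕ → Set Y)
    (hcover : (⋃ i ∈ Icc 2 (n + 2), ⋃ j ∈ Icc 2 (n + 2), T i j) = univ)
    (hdisj : ∀ i j i' j', (i, j) ≠ (i', j') → Disjoint (T i j) (T i' j'))
    (hclos : ∀ i ∈ Icc 2 (n + 2), ∀ j ∈ Icc 2 (n + 2),
      closure (T i j) ⊆ ⋃ r ∈ Icc 2 i, ⋃ s ∈ Icc 2 j, T r s)
    (f : ℕ → ℕ → Y → Z)
    (hf : ∀ i ∈ Icc 2 (n + 2), ∀ j ∈ Icc 2 (n + 2), ContinuousOn (f i j) (T i j))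
    (g : Y → Z)
    (hg : ∀ i ∈ Icc 2 (n + 2), ∀ j ∈ Icc 2 (n + 2), ∀ y ∈ T i j, g y = f i j y)
    (W : ℕ → Set Y)
    (hW : ∀ ℓ, W ℓ = ⋃ i ∈ Icc 2 (n + 2), ⋃ j ∈ Icc 2 (n + 2),
      ⋃ _ : i + j = ℓ, T i j) :
    (∀ i ∈ Icc 2 (n + 2), ∀ j ∈ Icc 2 (n + 2), ∀ i' ∈ Icc 2 (n + 2),
      ∀ j' ∈ Icc 2 (n + 2), i + j = i' + j' → (i, j) ≠ (i', j') →
        closure (T i j) ∩ T i' j' = ∅) ∧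
    (∀ ℓ ∈ Icc 4 (2 * n + 4), ContinuousOn g (W ℓ)) ∧
    (⋃ ℓ ∈ Icc 4 (2 * n + 4), W ℓ) = univ := by
  have key : ∀ i ∈ Icc 2 (n + 2), ∀ j ∈ Icc 2 (n + 2), ∀ i' ∈ Icc 2 (n + 2),
      ∀ j' ∈ Icc 2 (n + 2), i + j = i' + j' → (i, j) ≠ (i', j') →
        closure (T i j) ∩ T i' j' = ∅ := by
    intro i hi j hj i' hi' j' hj' hsum hne
    ext y
    simp only [mem_inter_iff, mem_empty_iff_false, iff_false, not_and]
    intro hyc hy'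
    have h1 := hclos i hi j hj hyc
    simp only [mem_iUnion, mem_Icc] at h1
    obtain ⟨r, ⟨hr2, hri⟩, s, ⟨hs2, hsj⟩, hyrs⟩ := h1
    have : (r, s) = (i', j') := by
      by_contra h
      exact (hdisj r s i' j' h).ne_of_mem hyrs hy' rfl
    rw [Prod.mk.injEq] at this
    obtain ⟨rfl, rfl⟩ := this
    exact hne (by simp only [Prod.mk.injEq]; omega)
  refine ⟨key, ?_, ?_⟩
  · intro ℓ _ y hy
    rw [hW ℓ] at hy ⊢
    simp only [mem_iUnion] at hy
    obtain ⟨i, hi, j, hj, hℓ, hyT⟩ := hy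
    -- the bad set
    set S := ((Finset.Icc 2 (n+2)) ×ˢ (Finset.Icc 2 (n+2))).filter
      (fun p => p.1 + p.2 = ℓ ∧ p ≠ (i, j)) with hS
    set U := (⋃ p ∈ S, closure (T p.1 p.2))ᶜ with hU
    have hUopen : IsOpen U := by
      rw [hU, isOpen_compl_iff]
      exact isClosed_biUnion_finset (fun p _ => isClosed_closure)
    have hyU : y ∈ U := by
      simp only [hU, mem_compl_iff, mem_iUnion, not_exists]
      rintro ⟨a, b⟩ hp hyc
      simp only [hS, Finset.mem_filter, Finset.mem_product, Finset.mem_Icc] at hp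
      obtain ⟨⟨ha, hb⟩, hab, hne⟩ := hp
      have := key a (by simpa using ha) b (by simpa using hb) i (by simpa using hi)
        j (by simpa using hj) (by omega) hne
      exact absurd (mem_inter hyc hyT) (by rw [this]; exact notMem_empty y)
    have hsub : (⋃ i' ∈ Icc 2 (n + 2), ⋃ j' ∈ Icc 2 (n + 2),
        ⋃ _ : i' + j' = ℓ, T i' j') ∩ U ⊆ T i j := by
      rintro z ⟨hz1, hz2⟩
      simp only [mem_iUnion] at hz1
      obtain ⟨a, ha, b, hb, hab, hzT⟩ := hz1
      by_cases h : (a, b) = (i, j)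
      · obtain ⟨rfl, rfl⟩ := Prod.mk.injEq .. ▸ h
        exact hzT
      · exfalso
        apply hz2
        simp only [mem_iUnion]
        refine ⟨(a, b), ?_, subset_closure hzT⟩
        simp only [hS, Finset.mem_filter, Finset.mem_product, Finset.mem_Icc]
        exact ⟨⟨by simpa using ha, by simpa using hb⟩, hab, h⟩
    have hmem : T i j ∈ nhdsWithin y (⋃ i' ∈ Icc 2 (n + 2), ⋃ j' ∈ Icc 2 (n + 2),
        ⋃ _ : i' + j' = ℓ, T i' j') :=
      mem_nhdsWithin.mpr ⟨U, hUopen, hyU, by rw [inter_comm]; exact hsub⟩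
    have hcw : ContinuousWithinAt g (T i j) y := by
      have := (hf i hi j hj) y hyT
      exact this.congr (hg i hi j hj) (hg i hi j hj y hyT)
    exact hcw.mono_of_mem_nhdsWithin hmem
  · apply eq_univ_of_univ_subset
    rw [← hcover]
    intro y hy
    simp only [mem_iUnion] at hy ⊢
    obtain ⟨i, hi, j, hj, hyT⟩ := hy
    simp only [mem_Icc] at hi hj
    refine ⟨i + j, by simp [mem_Icc]; omega, ?_⟩
    rw [hW (i + j)]
    simp only [mem_iUnion]
    exact ⟨i, by simp [mem_Icc]; omega, j, by simp [mem_Icc]; omega, rfl, hyT⟩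
end
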